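/- arXiv:1011.6302 — 2 statements merged into one kernel-verified Lean document; each statement's English description precedes it below -/
import Mathlib

section
/- Let ψ : {0,1}ⁿ → ℝ be a pseudo-Boolean function, let σ be a permutation of [n], and let x ∈ ℝⁿ_σ. Then L_ψ(x) = ψ(0) + Σ_{i=1}^{n} x_{σ(i)}·(v_ψ(A_σ^↑(i)) − v_ψ(A_σ^↑(i+1))), and equivalently L_ψ(x) = ψ(0) + Σ_{i=1}^{n} x_{σ(i)}·(L_ψ(1_{A_σ^↑(i)}) − L_ψ(1_{A_σ^↑(i+1)})). In particular the restriction of L_ψ to ℝⁿ_σ is an affine function agreeing with ψ at the points 1_{A_σ^↑(k)}, k ∈ [n+1]. -/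
/-!
Group the nonempty sets `A` by their element of least `σ`-rank. For `x ∈ ℝⁿ_σ` we have
`min_{i ∈ A} x_i = x_{σ(i)}` on every set whose least-rank element is `σ(i)`; these sets are the
subsets of `A_σ^↑(i)` containing `σ(i)`, and by Möbius inversion their coefficients `a_ψ(A)` sum
to `v_ψ(A_σ^↑(i)) − v_ψ(A_σ^↑(i+1))`. Möbius inversion also gives
`L_ψ(1_C) = Σ_{B ⊆ C} a_ψ(B) = ψ(C)` for every `C`, which turns the first formula into the second.
-/

open Finset

/-- The indicator tuple `1_A` of a subset `A ⊆ [n]`. -/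
def ind {n : ℕ} (A : Finset (Fin n)) : Fin n → ℝ := fun i => if i ∈ A then 1 else 0

/-- The Möbius transform of a pseudo-Boolean function (viewed as a set function). -/
def mobius {n : ℕ} (ψ : Finset (Fin n) → ℝ) (A : Finset (Fin n)) : ℝ :=
  ∑ B ∈ A.powerset, (-1 : ℝ) ^ (A.card - B.card) * ψ B

/-- `min_{i ∈ A} x i` (with value `0` for `A = ∅`). -/
def lovMinOn {n : ℕ} (A : Finset (Fin n)) (x : Fin n → ℝ) : ℝ :=
  if h : A.Nonempty then A.inf' h x else 0

/-- The Lovász extension of a pseudo-Boolean function `ψ` (viewed as a set function):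
`L_ψ(x) = a_ψ(∅) + Σ_{∅ ≠ A ⊆ [n]} a_ψ(A) · min_{i ∈ A} x_i`. -/
def Lov {n : ℕ} (ψ : Finset (Fin n) → ℝ) (x : Fin n → ℝ) : ℝ :=
  mobius ψ ∅ + ∑ A : Finset (Fin n), mobius ψ A * lovMinOn A x

/-- `x ∈ ℝⁿ_σ`, i.e. `x_{σ(1)} ≤ ⋯ ≤ x_{σ(n)}`. -/
def inRσ {n : ℕ} (σ : Equiv.Perm (Fin n)) (x : Fin n → ℝ) : Prop :=
  ∀ i j : Fin n, i ≤ j → x (σ i) ≤ x (σ j)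

/-- `A_σ^↑(k) = {σ(j) : j ≥ k}` (0-indexed; `Aup σ n = ∅`). -/
def Aup {n : ℕ} (σ : Equiv.Perm (Fin n)) (k : ℕ) : Finset (Fin n) :=
  (Finset.univ.filter fun j : Fin n => k ≤ (j : ℕ)).image σ

/-- `A_σ^↓(k) = {σ(j) : j < k}` (0-indexed; `Adown σ 0 = ∅`). -/
def Adown {n : ℕ} (σ : Equiv.Perm (Fin n)) (k : ℕ) : Finset (Fin n) :=
  (Finset.univ.filter fun j : Fin n => (j : ℕ) < k).image σ

theorem sum_Icc_neg_one_pow_card_sub {α R : Type*} [DecidableEq α] [Ring R] {s t : Finset α}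
    (h : s ⊆ t) :
    ∑ u ∈ Icc s t, (-1 : R) ^ (#u - #s) = if s = t then 1 else 0 := by
  have hinj : Set.InjOn (s ∪ ·) ((t \ s).powerset : Set (Finset α)) := fun u hu v hv huv => by
    simp only [coe_powerset, Set.mem_preimage, Set.mem_powerset_iff, coe_subset] at hu hv
    rw [← union_sdiff_cancel_left (disjoint_of_subset_right hu disjoint_sdiff),
      ← union_sdiff_cancel_left (disjoint_of_subset_right hv disjoint_sdiff)]
    exact congrArg (· \ s) huv
  rw [Icc_eq_image_powerset h, sum_image hinj]
  have hcard : ∀ u ∈ (t \ s).powerset, (-1 : R) ^ (#(s ∪ u) - #s) = ((-1 : ℤ) ^ #u : ℤ) := by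
    intro u hu
    rw [card_union_of_disjoint (disjoint_of_subset_right (mem_powerset.1 hu) disjoint_sdiff),
      Nat.add_sub_cancel_left]
    push_cast
    rfl
  rw [sum_congr rfl hcard, ← Int.cast_sum, sum_powerset_neg_one_pow_card]
  have hst : t \ s = ∅ ↔ s = t := by
    rw [sdiff_eq_empty_iff_subset]; exact ⟨subset_antisymm h, fun e => e ▸ subset_rfl⟩
  simp only [hst]
  split_ifs <;> simp

section Mobius

variable {n : ℕ} (ψ : Finset (Fin n) → ℝ)

theorem mobius_empty : mobius ψ ∅ = ψ ∅ := by
  simp [mobius]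

theorem sum_powerset_mobius (A : Finset (Fin n)) : ∑ B ∈ A.powerset, mobius ψ B = ψ A := by
  unfold mobius
  rw [sum_comm' (t' := A.powerset) (s' := fun C => Icc C A) fun B C => by
    simp only [mem_powerset, mem_Icc]
    exact ⟨fun ⟨hBA, hCB⟩ => ⟨⟨hCB, hBA⟩, hCB.trans hBA⟩, fun ⟨⟨hCB, hBA⟩, _⟩ => ⟨hBA, hCB⟩⟩]
  simp_rw [← sum_mul]
  rw [sum_congr rfl fun C hC => by rw [sum_Icc_neg_one_pow_card_sub (mem_powerset.1 hC)]]
  simp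

theorem sum_powerset_filter_mem_mobius (A : Finset (Fin n)) (a : Fin n) :
    ∑ B ∈ A.powerset with a ∈ B, mobius ψ B = ψ A - ψ (A.erase a) := by
  have hnot : {B ∈ A.powerset | a ∉ B} = (A.erase a).powerset := by
    ext B
    simp only [mem_filter, mem_powerset, subset_erase]
  rw [eq_sub_iff_add_eq, ← sum_powerset_mobius ψ (A.erase a), ← hnot,
    sum_filter_add_sum_filter_not, sum_powerset_mobius]

end Mobius

section Lovasz

variable {n : ℕ}

theorem lovMinOn_empty (x : Fin n → ℝ) : lovMinOn ∅ x = 0 := by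
  simp [lovMinOn]

theorem lovMinOn_ind (A C : Finset (Fin n)) :
    lovMinOn A (ind C) = if A.Nonempty ∧ A ⊆ C then 1 else 0 := by
  rcases A.eq_empty_or_nonempty with rfl | hA
  · simp [lovMinOn_empty]
  rw [lovMinOn, dif_pos hA]
  by_cases hAC : A ⊆ C
  · rw [if_pos ⟨hA, hAC⟩,
      inf'_congr hA rfl (f := ind C) (g := fun _ => 1) fun i hi => if_pos (hAC hi), inf'_const]
  · rw [if_neg fun h => hAC h.2]
    obtain ⟨a, haA, haC⟩ := not_subset.1 hAC
    refine le_antisymm (inf'_le_of_le _ haA (if_neg haC).le) (le_inf' _ _ fun i _ => ?_)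
    unfold ind
    split_ifs <;> norm_num

theorem Lov_ind (ψ : Finset (Fin n) → ℝ) (C : Finset (Fin n)) : Lov ψ (ind C) = ψ C := by
  rw [Lov, ← sum_powerset_mobius ψ C, ← add_sum_erase _ _ (empty_mem_powerset C)]
  simp only [lovMinOn_ind, mul_ite, mul_one, mul_zero, sum_ite, sum_const_zero, add_zero]
  congr 1
  refine sum_congr (ext fun A => ?_) fun _ _ => rfl
  simp [nonempty_iff_ne_empty]

end Lovasz

section Chain

variable {n : ℕ} (σ : Equiv.Perm (Fin n))

theorem mem_Aup {k : ℕ} {a : Fin n} : a ∈ Aup σ k ↔ k ≤ σ.symm a := by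
  simp only [Aup, mem_image, mem_filter, mem_univ, true_and]
  exact ⟨fun ⟨j, hj, hja⟩ => by simpa [← hja] using hj,
    fun h => ⟨σ.symm a, h, σ.apply_symm_apply a⟩⟩

theorem Aup_succ (i : Fin n) : Aup σ (i + 1) = (Aup σ i).erase (σ i) := by
  ext a
  simp only [mem_erase, mem_Aup, Ne, ← Equiv.symm_apply_eq, Fin.ext_iff]
  omega

/-- The nonempty sets whose element of least `σ`-rank is `σ i`. -/
def minFiber (i : Fin n) : Finset (Finset (Fin n)) :=
  {A ∈ (Aup σ i).powerset | σ i ∈ A}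

theorem mem_minFiber {i : Fin n} {A : Finset (Fin n)} :
    A ∈ minFiber σ i ↔ σ i ∈ A ∧ ∀ a ∈ A, i ≤ σ.symm a := by
  simp only [minFiber, mem_filter, mem_powerset, subset_iff, mem_Aup, Fin.le_def]
  exact and_comm

theorem sum_minFiber_mobius (ψ : Finset (Fin n) → ℝ) (i : Fin n) :
    ∑ A ∈ minFiber σ i, mobius ψ A = ψ (Aup σ i) - ψ (Aup σ (i + 1)) := by
  rw [minFiber, sum_powerset_filter_mem_mobius, Aup_succ]

theorem lovMinOn_of_mem_minFiber {x : Fin n → ℝ} (hx : inRσ σ x) {i : Fin n}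
    {A : Finset (Fin n)} (hA : A ∈ minFiber σ i) : lovMinOn A x = x (σ i) := by
  obtain ⟨hiA, hmin⟩ := (mem_minFiber σ).1 hA
  rw [lovMinOn, dif_pos ⟨σ i, hiA⟩]
  refine le_antisymm (inf'_le _ hiA) (le_inf' _ _ fun a ha => ?_)
  simpa using hx i (σ.symm a) (hmin a ha)

theorem pairwiseDisjoint_minFiber :
    ((univ : Finset (Fin n)) : Set (Fin n)).PairwiseDisjoint (minFiber σ) := by
  intro i _ j _ hij
  refine disjoint_left.2 fun A hAi hAj => hij (le_antisymm ?_ ?_)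
  · simpa using ((mem_minFiber σ).1 hAi).2 _ ((mem_minFiber σ).1 hAj).1
  · simpa using ((mem_minFiber σ).1 hAj).2 _ ((mem_minFiber σ).1 hAi).1

theorem biUnion_minFiber : univ.biUnion (minFiber σ) = univ.filter Finset.Nonempty := by
  ext A
  simp only [mem_biUnion, mem_univ, true_and, mem_filter]
  constructor
  · rintro ⟨i, hi⟩
    exact ⟨σ i, ((mem_minFiber σ).1 hi).1⟩
  · intro hA
    obtain ⟨a, haA, hmin⟩ := exists_min_image A σ.symm hA
    exact ⟨σ.symm a, (mem_minFiber σ).2 ⟨by simpa using haA, hmin⟩⟩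

end Chain

theorem Lov_eq_of_inRσ {n : ℕ} (ψ : Finset (Fin n) → ℝ) {σ : Equiv.Perm (Fin n)}
    {x : Fin n → ℝ} (hx : inRσ σ x) :
    Lov ψ x = ψ ∅ + ∑ i : Fin n, x (σ i) * (ψ (Aup σ i) - ψ (Aup σ (i + 1))) := by
  have hnonempty : ∑ A, mobius ψ A * lovMinOn A x
      = ∑ A ∈ univ.filter Finset.Nonempty, mobius ψ A * lovMinOn A x := by
    refine (sum_filter_of_ne fun A _ hA => nonempty_iff_ne_empty.2 ?_).symm
    rintro rfl
    simp [lovMinOn_empty] at hA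
  rw [Lov, mobius_empty, hnonempty, ← biUnion_minFiber σ,
    sum_biUnion (pairwiseDisjoint_minFiber σ)]
  congr 1
  refine sum_congr rfl fun i _ => ?_
  rw [← sum_minFiber_mobius, mul_sum]
  exact sum_congr rfl fun A hA => by rw [lovMinOn_of_mem_minFiber σ hx hA, mul_comm]

/-- On `ℝⁿ_σ` the Lovász extension is given by the two affine formulas
`L_ψ(x) = ψ(∅) + Σᵢ x_{σ(i)}·(v_ψ(A_σ^↑(i)) − v_ψ(A_σ^↑(i+1)))`
`       = ψ(∅) + Σᵢ x_{σ(i)}·(L_ψ(1_{A_σ^↑(i)}) − L_ψ(1_{A_σ^↑(i+1)}))`,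
and in particular it agrees with `ψ` at the points `1_{A_σ^↑(k)}`, `k ∈ [n+1]`. -/
theorem stmt0 {n : ℕ} (ψ : Finset (Fin n) → ℝ) (σ : Equiv.Perm (Fin n))
    (x : Fin n → ℝ) (hx : inRσ σ x) :
    (Lov ψ x = ψ ∅ + ∑ i : Fin n,
      x (σ i) * (ψ (Aup σ (i : ℕ)) - ψ (Aup σ ((i : ℕ) + 1)))) ∧
    (Lov ψ x = ψ ∅ + ∑ i : Fin n,
      x (σ i) * (Lov ψ (ind (Aup σ (i : ℕ))) - Lov ψ (ind (Aup σ ((i : ℕ) + 1))))) ∧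
    (∀ k : ℕ, k ≤ n → Lov ψ (ind (Aup σ k)) = ψ (Aup σ k)) := by
  refine ⟨Lov_eq_of_inRσ ψ hx, ?_, fun k _ => Lov_ind ψ (Aup σ k)⟩
  simpa only [Lov_ind] using Lov_eq_of_inRσ ψ hx
end

section
/- Let I ⊆ ℝ₋ = (−∞,0] be a real interval containing 0 and let f : Iⁿ → ℝ be a quasi-Lovász extension, f = L ∘ φ. Then for every x ∈ I and every A ⊆ [n], f_0(x·1_A) = −φ(x)·L_0(−1_A), where f_0 = f − f(0,…,0) and L_0 = L − L(0,…,0). -/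
/- On `I ⊆ ℝ₋`, the point `x • 1_A` has only the coordinates `x` and `0`, so `φ` maps it to
`φ x • 1_A = (-φ x) • (-1_A)` with `-φ x ≥ 0`; the identity is then the positive homogeneity
of `L_0`, which holds because every `min_{i ∈ A}` commutes with nonnegative scalings. -/

open Finset

theorem lovMinOn_const_mul {n : ℕ} (A : Finset (Fin n)) (y : Fin n → ℝ) {t : ℝ} (ht : 0 ≤ t) :
    lovMinOn A (fun i => t * y i) = t * lovMinOn A y := by
  unfold lovMinOn
  split_ifs with hA
  · exact (A.apply_inf'_eq_inf'_comp hA (t * ·) fun a b => mul_min_of_nonneg a b ht).symm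
  · rw [mul_zero]

theorem lovMinOn_zero {n : ℕ} (A : Finset (Fin n)) : lovMinOn A (fun _ => 0) = 0 := by
  simpa using lovMinOn_const_mul A (fun _ => 0) le_rfl

theorem Lov_sub_Lov_zero {n : ℕ} (ψ : Finset (Fin n) → ℝ) (y : Fin n → ℝ) :
    Lov ψ y - Lov ψ (fun _ => 0) = ∑ A : Finset (Fin n), mobius ψ A * lovMinOn A y := by
  simp [Lov, lovMinOn_zero]

theorem Lov_sub_Lov_zero_const_mul {n : ℕ} (ψ : Finset (Fin n) → ℝ) (y : Fin n → ℝ) {t : ℝ}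
    (ht : 0 ≤ t) :
    Lov ψ (fun i => t * y i) - Lov ψ (fun _ => 0) = t * (Lov ψ y - Lov ψ (fun _ => 0)) := by
  simp only [Lov_sub_Lov_zero, lovMinOn_const_mul _ _ ht, Finset.mul_sum]
  exact Finset.sum_congr rfl fun A _ => by ring

theorem apply_mul_ind {n : ℕ} (φ : ℝ → ℝ) (hφ0 : φ 0 = 0) (x : ℝ) (A : Finset (Fin n)) (i : Fin n) :
    φ (x * ind A i) = -φ x * -ind A i := by
  by_cases hi : i ∈ A <;> simp [ind, hi, hφ0]

theorem stmt5_general {n : ℕ} (I : Set ℝ) (h0 : (0 : ℝ) ∈ I)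
    (hIneg : I ⊆ Set.Iic (0 : ℝ))
    (f L : (Fin n → ℝ) → ℝ) (φ : ℝ → ℝ)
    (hL : ∃ ψ : Finset (Fin n) → ℝ, L = Lov ψ)
    (hφ : MonotoneOn φ I) (hφ0 : φ 0 = 0)
    (hf : ∀ x : Fin n → ℝ, (∀ i, x i ∈ I) → f x = L (fun i => φ (x i))) :
    ∀ x ∈ I, ∀ A : Finset (Fin n),
      f (fun i => x * ind A i) - f (fun _ => 0) =
        -(φ x) * (L (fun i => -(ind A i)) - L (fun _ => 0)) := by
  obtain ⟨ψ, rfl⟩ := hL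
  intro x hx A
  have hxA : ∀ i, x * ind A i ∈ I := fun i => by
    by_cases hi : i ∈ A <;> simp [ind, hi, hx, h0]
  have hφx : φ x ≤ 0 := hφ0 ▸ hφ hx h0 (hIneg hx)
  rw [hf _ hxA, hf _ fun _ => h0, hφ0]
  simp only [apply_mul_ind φ hφ0 x A]
  exact Lov_sub_Lov_zero_const_mul ψ _ (neg_nonneg.mpr hφx)

/-- For a quasi-Lovász extension `f = L ∘ φ` on `Iⁿ` with `I ⊆ ℝ₋` an
interval containing `0`, one has `f_0(x·1_A) = −φ(x)·L_0(−1_A)` for all `x ∈ I`, `A ⊆ [n]`. -/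
theorem stmt5 {n : ℕ} (I : Set ℝ) (hI : I.OrdConnected) (h0 : (0 : ℝ) ∈ I)
    (hIneg : I ⊆ Set.Iic (0 : ℝ))
    (f L : (Fin n → ℝ) → ℝ) (φ : ℝ → ℝ)
    (hL : ∃ ψ : Finset (Fin n) → ℝ, L = Lov ψ)
    (hφ : MonotoneOn φ I) (hφ0 : φ 0 = 0)
    (hf : ∀ x : Fin n → ℝ, (∀ i, x i ∈ I) → f x = L (fun i => φ (x i))) :
    ∀ x ∈ I, ∀ A : Finset (Fin n),
      f (fun i => x * ind A i) - f (fun _ => 0) =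
        -(φ x) * (L (fun i => -(ind A i)) - L (fun _ => 0)) :=
  stmt5_general I h0 hIneg f L φ hL hφ hφ0 hf
end
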